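/- Let ξ and η be positive irrational real numbers and m a positive natural number with ξ·η = m. Suppose both (n−1, k−1) and (n, k) are connected, where n ≥ 2 and k ≥ 2, and set r = p_{n−1}/Q_{k−1}, s = P_{k−1}/q_{n−1}. Then the complete quotients satisfy the exact relation r·ξ_n − s·η_k = 0. -/

import Mathlib

/-!
Write `ξ = (p_{n-1} ξ_n + p_{n-2}) / (q_{n-1} ξ_n + q_{n-2})` and likewise for `η`, clear
denominators in `ξ η = m`, and use the connection at `(n - 1, k - 1)` and at `(n, k)` to cancel
the constant and the `ξ_n η_k` terms. By coprimality of convergents, the connection at `(n, k)`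
factors as `p_{n-1} = r Q_{k-1}`, `P_{k-1} = s q_{n-1}`, `m = r s`, and the determinant identity
`p_{n-1} q_{n-2} - p_{n-2} q_{n-1} = ±1` turns what is left into
`± r ξ_n ± s η_k = 0`. Since `ξ_n`, `η_k` are positive and `r s = m > 0`, the two signs
must differ.
-/

/-- Complete quotients: `cq ξ 0 = ξ`, `cq ξ (n+1) = 1/(cq ξ n - ⌊cq ξ n⌋)`. -/
noncomputable def cq (ξ : ℝ) : ℕ → ℝ
  | 0 => ξ
  | n + 1 => 1 / (cq ξ n - ⌊cq ξ n⌋)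

/-- Partial quotients: `pquot ξ n = b_n = ⌊ξ_n⌋`. -/
noncomputable def pquot (ξ : ℝ) (n : ℕ) : ℤ := ⌊cq ξ n⌋

/-- Convergent numerators, shifted by one: `cnum ξ 0 = p_{-1} = 1`,
`cnum ξ 1 = p_0 = b_0`, and `cnum ξ (n+1) = p_n = b_n p_{n-1} + p_{n-2}`. -/
noncomputable def cnum (ξ : ℝ) : ℕ → ℤ
  | 0 => 1
  | 1 => pquot ξ 0
  | n + 2 => pquot ξ (n + 1) * cnum ξ (n + 1) + cnum ξ n

/-- Convergent denominators, shifted by one: `cden ξ 0 = q_{-1} = 0`,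
`cden ξ 1 = q_0 = 1`, and `cden ξ (n+1) = q_n = b_n q_{n-1} + q_{n-2}`. -/
noncomputable def cden (ξ : ℝ) : ℕ → ℤ
  | 0 => 0
  | 1 => 1
  | n + 2 => pquot ξ (n + 1) * cden ξ (n + 1) + cden ξ n

lemma cq_succ (ξ : ℝ) (n : ℕ) : cq ξ (n + 1) = (Int.fract (cq ξ n))⁻¹ := by
  rw [cq, one_div]
  rfl

lemma cnum_succ_mul_cden_sub_cnum_mul_cden_succ (ξ : ℝ) : ∀ n : ℕ,
    cnum ξ (n + 1) * cden ξ n - cnum ξ n * cden ξ (n + 1) = (-1) ^ (n + 1)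
  | 0 => by simp [cnum, cden]
  | n + 1 => by
    rw [cnum, cden, pow_succ, ← cnum_succ_mul_cden_sub_cnum_mul_cden_succ ξ n]
    ring

lemma isCoprime_cnum_cden (ξ : ℝ) : ∀ n, IsCoprime (cnum ξ n) (cden ξ n)
  | 0 => isCoprime_one_left
  | n + 1 => by
    have hsq : ((-1 : ℤ) ^ (n + 1)) ^ 2 = 1 := by
      rw [← pow_mul]
      exact Even.neg_one_pow ⟨n + 1, by ring⟩
    refine ⟨(-1) ^ (n + 1) * cden ξ n, -((-1) ^ (n + 1) * cnum ξ n), ?_⟩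
    linear_combination (-1 : ℤ) ^ (n + 1) * cnum_succ_mul_cden_sub_cnum_mul_cden_succ ξ n + hsq

variable {ξ : ℝ}

lemma Irrational.fract_pos {x : ℝ} (h : Irrational x) : 0 < Int.fract x :=
  Int.fract_pos.2 (h.ne_int _)

lemma irrational_cq (h : Irrational ξ) : ∀ n, Irrational (cq ξ n)
  | 0 => h
  | n + 1 => by
    rw [cq_succ]
    exact ((irrational_cq h n).sub_intCast _).inv

lemma one_lt_cq_succ (h : Irrational ξ) (n : ℕ) : 1 < cq ξ (n + 1) := by
  have hf := (irrational_cq h n).fract_pos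
  rw [cq_succ, one_lt_inv₀ hf]
  exact Int.fract_lt_one _

lemma one_le_pquot_succ (h : Irrational ξ) (n : ℕ) : 1 ≤ pquot ξ (n + 1) :=
  Int.le_floor.2 (by exact_mod_cast (one_lt_cq_succ h n).le)

lemma cq_mul_cq_succ (h : Irrational ξ) (n : ℕ) :
    cq ξ n * cq ξ (n + 1) = pquot ξ n * cq ξ (n + 1) + 1 := by
  have hf := (irrational_cq h n).fract_pos.ne'
  rw [cq_succ, pquot]
  nth_rewrite 1 [← Int.floor_add_fract (cq ξ n)]
  rw [add_mul, mul_inv_cancel₀ hf]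

lemma one_le_cden_succ (h : Irrational ξ) : ∀ n, 1 ≤ cden ξ (n + 1)
  | 0 => le_rfl
  | 1 => by simpa [cden] using one_le_pquot_succ h 0
  | n + 2 => by
    have h₁ := one_le_cden_succ h (n + 1)
    have h₀ := one_le_cden_succ h n
    have hb := one_le_pquot_succ h (n + 1)
    show 1 ≤ pquot ξ (n + 2) * cden ξ (n + 2) + cden ξ (n + 1)
    nlinarith

lemma self_mul_cden_cq_add_cden_eq_cnum_cq_add_cnum (h : Irrational ξ) : ∀ n,
    ξ * (cden ξ (n + 1) * cq ξ (n + 1) + cden ξ n) = cnum ξ (n + 1) * cq ξ (n + 1) + cnum ξ n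
  | 0 => by
    have h₀ : cq ξ 0 * cq ξ 1 = pquot ξ 0 * cq ξ 1 + 1 := cq_mul_cq_succ h 0
    rw [show cq ξ 0 = ξ from rfl] at h₀
    simp only [cden, cnum, Int.cast_one, Int.cast_zero, zero_add]
    linear_combination h₀
  | n + 1 => by
    simp only [cnum, cden]
    push_cast
    linear_combination cq ξ (n + 2) * self_mul_cden_cq_add_cden_eq_cnum_cq_add_cnum h n +
      ((cnum ξ (n + 1) : ℝ) - ξ * cden ξ (n + 1)) * cq_mul_cq_succ h (n + 1)

lemma exists_eq_mul_of_isCoprime_of_mul_eq {p q P Q m : ℤ} (hpq : IsCoprime p q)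
    (hPQ : IsCoprime P Q) (hq : q ≠ 0) (hQ : Q ≠ 0) (h : p * P = m * q * Q) :
    ∃ r s, p = Q * r ∧ P = q * s ∧ m = r * s := by
  obtain ⟨r, rfl⟩ : Q ∣ p := hPQ.symm.dvd_of_dvd_mul_left ⟨m * q, by linear_combination h⟩
  obtain ⟨s, rfl⟩ : q ∣ P := hpq.symm.dvd_of_dvd_mul_left ⟨m * Q, by linear_combination h⟩
  refine ⟨r, s, rfl, rfl, mul_right_cancel₀ (mul_ne_zero hq hQ) ?_⟩
  linear_combination -h

/-- `(n, k)` is connected in the sense of the paper (recall `cnum ξ n = p_{n-1}`). -/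
def Connected (ξ η : ℝ) (m n k : ℕ) : Prop :=
  cnum ξ n * cnum η k = (m : ℤ) * cden ξ n * cden η k

variable {η : ℝ} {m n k : ℕ}

lemma Connected.cross_relation (hξ : Irrational ξ) (hη : Irrational η) (hmul : ξ * η = m)
    (hprev : Connected ξ η m n k) (hconn : Connected ξ η m (n + 1) (k + 1)) :
    cq ξ (n + 1) * (cnum ξ (n + 1) * cnum η k - m * cden ξ (n + 1) * cden η k) +
      cq η (k + 1) * (cnum ξ n * cnum η (k + 1) - m * cden ξ n * cden η (k + 1)) =
        (0 : ℝ) := by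
  have hx := self_mul_cden_cq_add_cden_eq_cnum_cq_add_cnum hξ n
  have hy := self_mul_cden_cq_add_cden_eq_cnum_cq_add_cnum hη k
  have hprevR : (cnum ξ n * cnum η k : ℝ) = m * cden ξ n * cden η k := by exact_mod_cast hprev
  have hconnR :
      (cnum ξ (n + 1) * cnum η (k + 1) : ℝ) = m * cden ξ (n + 1) * cden η (k + 1) := by
    exact_mod_cast hconn
  set X := (cden ξ (n + 1) * cq ξ (n + 1) + cden ξ n : ℝ)
  set Y := (cden η (k + 1) * cq η (k + 1) + cden η k : ℝ)
  linear_combination -(cnum η (k + 1) * cq η (k + 1) + cnum η k : ℝ) * hx - ξ * X * hy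
    + X * Y * hmul - cq ξ (n + 1) * cq η (k + 1) * hconnR - hprevR

lemma Connected.neg_one_pow_relation {r s : ℤ} (hξ : Irrational ξ) (hη : Irrational η)
    (hmul : ξ * η = m) (hprev : Connected ξ η m n k)
    (hr : cnum ξ (n + 1) = cden η (k + 1) * r) (hs : cnum η (k + 1) = cden ξ (n + 1) * s)
    (hrs : (m : ℤ) = r * s) :
    (-1) ^ (k + 1) * (r * cq ξ (n + 1)) + (-1) ^ (n + 1) * (s * cq η (k + 1)) = 0 := by
  have hconn : Connected ξ η m (n + 1) (k + 1) := by
    rw [Connected, hr, hs, hrs]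
    ring
  have hcross := hprev.cross_relation hξ hη hmul hconn
  have dx : (cnum ξ (n + 1) * cden ξ n - cnum ξ n * cden ξ (n + 1) : ℝ) = (-1) ^ (n + 1) := by
    exact_mod_cast cnum_succ_mul_cden_sub_cnum_mul_cden_succ ξ n
  have dy : (cnum η (k + 1) * cden η k - cnum η k * cden η (k + 1) : ℝ) = (-1) ^ (k + 1) := by
    exact_mod_cast cnum_succ_mul_cden_sub_cnum_mul_cden_succ η k
  have hrR : (cnum ξ (n + 1) : ℝ) = cden η (k + 1) * r := by exact_mod_cast hr
  have hsR : (cnum η (k + 1) : ℝ) = cden ξ (n + 1) * s := by exact_mod_cast hs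
  have hrsR : (m : ℝ) = r * s := by exact_mod_cast hrs
  set A := cq ξ (n + 1)
  set B := cq η (k + 1)
  linear_combination
    A * ((cnum η k : ℝ) * hrR - cden ξ (n + 1) * cden η k * hrsR + r * cden η k * hsR)
    + B * ((cnum ξ n : ℝ) * hsR - cden ξ n * cden η (k + 1) * hrsR + s * cden ξ n * hrR)
    - hcross - r * A * dy - s * B * dx

lemma eq_of_neg_one_pow_mul_add_neg_one_pow_mul_eq_zero {R : Type*} [CommRing R] [LinearOrder R]
    [IsStrictOrderedRing R] {a b : R} (hab : 0 < a * b) (i j : ℕ)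
    (h : (-1) ^ i * a + (-1) ^ j * b = 0) : a = b := by
  rcases neg_one_pow_eq_or R i with hi | hi <;> rcases neg_one_pow_eq_or R j with hj | hj <;>
    rw [hi, hj] at h <;> nlinarith

theorem consecutive_connections_complete_quotients_general
    (ξ η : ℝ) (m : ℕ)
    (hξirr : Irrational ξ) (hηirr : Irrational η) (hm : 0 < m)
    (hmul : ξ * η = m) (n k : ℕ) (hn : 2 ≤ n) (hk : 2 ≤ k)
    (hconnPrev : cnum ξ (n - 1) * cnum η (k - 1) =
      (m : ℤ) * cden ξ (n - 1) * cden η (k - 1))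
    (hconn : cnum ξ n * cnum η k = (m : ℤ) * cden ξ n * cden η k) :
    ((cnum ξ n / cden η k : ℤ) : ℝ) * cq ξ n -
      ((cnum η k / cden ξ n : ℤ) : ℝ) * cq η k = 0 := by
  obtain ⟨n, rfl⟩ : ∃ n', n = n' + 1 := ⟨n - 1, by omega⟩
  obtain ⟨k, rfl⟩ : ∃ k', k = k' + 1 := ⟨k - 1, by omega⟩
  have hq := one_le_cden_succ hξirr n
  have hQ := one_le_cden_succ hηirr k
  obtain ⟨r, s, hr, hs, hrs⟩ := exists_eq_mul_of_isCoprime_of_mul_eq (isCoprime_cnum_cden ξ _)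
    (isCoprime_cnum_cden η _) (by omega) (by omega) hconn
  have hrel := Connected.neg_one_pow_relation hξirr hηirr hmul hconnPrev hr hs hrs
  have hpos : 0 < (r * cq ξ (n + 1)) * (s * cq η (k + 1)) := by
    have hrsR : (0 : ℝ) < r * s := by exact_mod_cast hrs ▸ Int.natCast_pos.2 hm
    rw [mul_mul_mul_comm]
    exact mul_pos hrsR (mul_pos (one_pos.trans (one_lt_cq_succ hξirr n))
      (one_pos.trans (one_lt_cq_succ hηirr k)))
  rw [hr, hs, Int.mul_ediv_cancel_left _ (by omega), Int.mul_ediv_cancel_left _ (by omega)]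
  exact sub_eq_zero.2 (eq_of_neg_one_pow_mul_add_neg_one_pow_mul_eq_zero hpos _ _ hrel)

/-- For two consecutive connections `(n-1, k-1)` and `(n, k)`, the complete
quotients satisfy `r·ξ_n - s·η_k = 0`. -/
theorem consecutive_connections_complete_quotients
    (ξ η : ℝ) (m : ℕ) (hξpos : 0 < ξ) (hηpos : 0 < η)
    (hξirr : Irrational ξ) (hηirr : Irrational η) (hm : 0 < m)
    (hmul : ξ * η = m) (n k : ℕ) (hn : 2 ≤ n) (hk : 2 ≤ k)
    (hconnPrev : cnum ξ (n - 1) * cnum η (k - 1) =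
      (m : ℤ) * cden ξ (n - 1) * cden η (k - 1))
    (hconn : cnum ξ n * cnum η k = (m : ℤ) * cden ξ n * cden η k) :
    ((cnum ξ n / cden η k : ℤ) : ℝ) * cq ξ n -
      ((cnum η k / cden ξ n : ℤ) : ℝ) * cq η k = 0 :=
  consecutive_connections_complete_quotients_general ξ η m hξirr hηirr hm hmul n k hn hk hconnPrev
    hconn
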